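/- Let f : X → ℝ ∪ {∞} be closed convex and β-strongly convex with respect to a norm ‖·‖ on a real inner product space X, with f*(0) = 0. Then for any sequence v_1, …, v_n ∈ X and any u ∈ X, writing v_{1:i} = v_1 + ⋯ + v_i, we have Σ_{i=1}^n ⟨v_i, u⟩ − f(u) ≤ f*(v_{1:n}) ≤ Σ_{i=1}^n ⟨∇f*(v_{1:i−1}), v_i⟩ + (1/(2β)) Σ_{i=1}^n ‖v_i‖*² (where v_{1:0} = 0). -/

import Mathlib

/-!
Write `φ_y x = ⟪x, y⟫ - f x`, so that `f⋆ y = sup φ_y`; strong convexity is only available on the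
relative interior `T` of `dom f`, but concavity of `φ_y` along segments shows the supremum may be
taken over `T`. If `w ∈ T` is an `ε`-maximiser of `φ_y`, strong convexity between `x` and `w` gives
`φ_y x ≤ f⋆ y + ε / α - β/2 (1 - α) N(x - w)²`, and with `⟪x - w, v⟫ ≤ N(x - w) ‖v‖⋆` this yields
`f⋆ (y + v) ≤ f⋆ y + ⟪w, v⟫ + ε / α + ‖v‖⋆² / (2β(1 - α))`. As `w` is an `ε`-subgradient of `f⋆`
at `y`, `⟪w, v⟫` is at most a difference quotient of `f⋆` along `v` up to `ε / t`; letting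
`ε, α, t → 0` gives `f⋆ (y + v) ≤ f⋆ y + ⟪∇f⋆ y, v⟫ + ‖v‖⋆² / (2β)`.
Telescoping this along the partial sums gives the upper bound; the lower one is Fenchel–Young.
-/

open scoped BigOperators
open RealInnerProductSpace

/-- `N` is a norm on the real vector space `V`. -/
def IsNormOn {V : Type*} [AddCommGroup V] [Module ℝ V] (N : V → ℝ) : Prop :=
  (∀ x, 0 ≤ N x) ∧ (∀ x, N x = 0 → x = 0) ∧
    (∀ (c : ℝ) (x : V), N (c • x) = |c| * N x) ∧ ∀ x y, N (x + y) ≤ N x + N y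

variable {X : Type*} [NormedAddCommGroup X] [InnerProductSpace ℝ X]

/-- The dual norm of `N` with respect to the inner product:
`‖y‖⋆ = sup { ⟪x, y⟫ : N x ≤ 1 }`. -/
noncomputable def dualNorm (N : X → ℝ) (y : X) : ℝ :=
  sSup {r : ℝ | ∃ x : X, N x ≤ 1 ∧ r = ⟪x, y⟫}

/-- The Fenchel conjugate `f⋆(y) = sup_x (⟪x, y⟫ - f x)` of an extended-real-valued `f`. -/
noncomputable def fenchelConj (f : X → EReal) (y : X) : EReal :=
  ⨆ x : X, ((⟪x, y⟫ : ℝ) : EReal) - f x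

/-- `f` is convex (with values in `ℝ ∪ {∞}`). -/
def ERealConvexOn (f : X → EReal) : Prop :=
  ∀ (x y : X) (α : ℝ), 0 ≤ α → α ≤ 1 →
    f (α • x + (1 - α) • y) ≤ (α : EReal) * f x + ((1 - α : ℝ) : EReal) * f y

/-- `f` is `β`-strongly convex w.r.t. the norm `N`. -/
def EStrongConvexOn (N : X → ℝ) (β : ℝ) (f : X → EReal) : Prop :=
  ∀ x ∈ intrinsicInterior ℝ {z : X | f z ≠ ⊤}, ∀ y ∈ intrinsicInterior ℝ {z : X | f z ≠ ⊤},
    ∀ α : ℝ, 0 < α → α < 1 →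
      f (α • x + (1 - α) • y) ≤
        (α : EReal) * f x + ((1 - α : ℝ) : EReal) * f y
          - ((β / 2 * α * (1 - α) * N (x - y) ^ 2 : ℝ) : EReal)

open Filter Topology Set

section IntrinsicInterior

variable {E : Type*} [AddCommGroup E] [Module ℝ E] [TopologicalSpace E]

theorem mem_intrinsicInterior_iff_mem_nhdsWithin {s : Set E} {z : E} :
    z ∈ intrinsicInterior ℝ s ↔
      z ∈ affineSpan ℝ s ∧ s ∈ 𝓝[(affineSpan ℝ s : Set E)] z := by
  constructor
  · rintro ⟨⟨z, hz⟩, hint, rfl⟩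
    exact ⟨hz, by rw [← map_nhds_subtype_val]; exact mem_interior_iff_mem_nhds.1 hint⟩
  · rintro ⟨hz, hs⟩
    rw [← map_nhds_subtype_val ⟨z, hz⟩] at hs
    exact ⟨⟨z, hz⟩, mem_interior_iff_mem_nhds.2 hs, rfl⟩

variable [IsTopologicalAddGroup E] [ContinuousSMul ℝ E]

theorem Convex.combo_intrinsicInterior_self_mem_intrinsicInterior {s : Set E} (hs : Convex ℝ s)
    {z x : E} (hz : z ∈ intrinsicInterior ℝ s) (hx : x ∈ s) {a b : ℝ} (ha : 0 < a) (hb : 0 ≤ b)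
    (hab : a + b = 1) : a • z + b • x ∈ intrinsicInterior ℝ s := by
  rw [mem_intrinsicInterior_iff_mem_nhdsWithin] at hz ⊢
  obtain ⟨hz, hzs⟩ := hz
  obtain rfl : b = 1 - a := eq_sub_of_add_eq' hab
  have ha' : a ≠ 0 := ha.ne'
  have hxA : x ∈ affineSpan ℝ s := subset_affineSpan ℝ s hx
  have hcombo : a • z + (1 - a) • x = AffineMap.lineMap x z a := by
    rw [AffineMap.lineMap_apply_module, add_comm]
  -- `h` inverts `q ↦ a • q + (1 - a) • x` and preserves the affine span, so it pulls
  -- relative neighbourhoods of `z` back to relative neighbourhoods of `a • z + (1 - a) • x`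
  set h : E → E := fun q ↦ AffineMap.lineMap x q a⁻¹
  have hmaps : MapsTo h (affineSpan ℝ s) (affineSpan ℝ s) :=
    fun q hq ↦ AffineMap.lineMap_mem a⁻¹ hxA hq
  have hhz : h (a • z + (1 - a) • x) = z := by
    simp only [h, hcombo, AffineMap.lineMap_apply_module]
    match_scalars
    · field_simp; ring
    · field_simp
  refine ⟨hcombo ▸ AffineMap.lineMap_mem a hxA hz, ?_⟩
  have hcont : Continuous h := by
    simp only [h, AffineMap.lineMap_apply_module]; fun_prop
  have := hcont.continuousWithinAt.tendsto_nhdsWithin hmaps (x := a • z + (1 - a) • x)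
  rw [hhz] at this
  filter_upwards [this hzs] with q hq
  have hq' : q = a • h q + (1 - a) • x := by
    simp only [h, AffineMap.lineMap_apply_module]
    match_scalars
    · field_simp
    · field_simp; ring
  rw [hq']
  exact hs hq hx ha.le hb hab

theorem Convex.intrinsicInterior {s : Set E} (hs : Convex ℝ s) :
    Convex ℝ (intrinsicInterior ℝ s) := by
  intro z hz x hx a b ha hb hab
  rcases ha.eq_or_lt with rfl | ha
  · rw [zero_add] at hab
    simpa [hab] using hx
  · exact hs.combo_intrinsicInterior_self_mem_intrinsicInterior hz
      (intrinsicInterior_subset hx) ha hb hab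

end IntrinsicInterior

theorem ConcaveOn.le_of_forall_intrinsicInterior_le {E : Type*} [NormedAddCommGroup E]
    [NormedSpace ℝ E] [FiniteDimensional ℝ E] {s : Set E} {ψ : E → ℝ} {B : ℝ}
    (hψ : ConcaveOn ℝ s ψ) (hB : ∀ z ∈ intrinsicInterior ℝ s, ψ z ≤ B) {x : E} (hx : x ∈ s) :
    ψ x ≤ B := by
  obtain ⟨z, hz⟩ := Set.Nonempty.intrinsicInterior hψ.1 ⟨x, hx⟩
  have hlim : Tendsto (fun a : ℝ ↦ a * ψ z + (1 - a) * ψ x) (𝓝[>] 0) (𝓝 (ψ x)) := by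
    have : Continuous (fun a : ℝ ↦ a * ψ z + (1 - a) * ψ x) := by fun_prop
    simpa using this.continuousWithinAt.tendsto (x := 0) (s := Ioi 0)
  refine le_of_tendsto hlim ?_
  filter_upwards [Ioc_mem_nhdsGT zero_lt_one] with a ⟨ha0, ha1⟩
  calc a * ψ z + (1 - a) * ψ x ≤ ψ (a • z + (1 - a) • x) :=
        hψ.2 (intrinsicInterior_subset hz) hx ha0.le (by linarith) (by ring)
    _ ≤ B := hB _ (hψ.1.combo_intrinsicInterior_self_mem_intrinsicInterior hz hx ha0
        (by linarith) (by ring))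

namespace IsNormOn

variable {V : Type*} [AddCommGroup V] [Module ℝ V] {N : V → ℝ}

theorem map_zero (hN : IsNormOn N) : N 0 = 0 := by
  simpa using hN.2.2.1 0 0

theorem pos (hN : IsNormOn N) {x : V} (hx : x ≠ 0) : 0 < N x :=
  (hN.1 x).lt_of_ne' fun h ↦ hx (hN.2.1 x h)

theorem map_smul_of_nonneg (hN : IsNormOn N) {c : ℝ} (hc : 0 ≤ c) (x : V) :
    N (c • x) = c * N x := by
  rw [hN.2.2.1, abs_of_nonneg hc]

theorem convexOn (hN : IsNormOn N) : ConvexOn ℝ univ N :=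
  ⟨convex_univ, fun x _ y _ a b ha hb _ ↦ by
    simpa only [hN.map_smul_of_nonneg ha, hN.map_smul_of_nonneg hb, smul_eq_mul]
      using hN.2.2.2 (a • x) (b • y)⟩

variable {E : Type*} [NormedAddCommGroup E] [NormedSpace ℝ E] [FiniteDimensional ℝ E]
  {N : E → ℝ}

theorem continuous (hN : IsNormOn N) : Continuous N :=
  continuousOn_univ.1 (hN.convexOn.continuousOn isOpen_univ)

theorem exists_pos_mul_norm_le (hN : IsNormOn N) : ∃ m > 0, ∀ x, m * ‖x‖ ≤ N x := by
  obtain ⟨m, hm, hmN⟩ := (isCompact_sphere (0 : E) 1).exists_forall_le'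
    hN.continuous.continuousOn fun x hx ↦ hN.pos (ne_zero_of_mem_unit_sphere ⟨x, hx⟩)
  refine ⟨m, hm, fun x ↦ ?_⟩
  rcases eq_or_ne x 0 with rfl | hx
  · simp [hN.map_zero]
  · have hxpos : 0 < ‖x‖ := norm_pos_iff.2 hx
    have := hmN (‖x‖⁻¹ • x) (by simp [norm_smul, hxpos.ne'])
    rw [hN.map_smul_of_nonneg (inv_nonneg.2 hxpos.le), le_inv_mul_iff₀ hxpos] at this
    linarith

theorem bddAbove_inner [FiniteDimensional ℝ X] {N : X → ℝ} (hN : IsNormOn N) (v : X) :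
    BddAbove {r : ℝ | ∃ x : X, N x ≤ 1 ∧ r = ⟪x, v⟫} := by
  obtain ⟨m, hm, hmN⟩ := hN.exists_pos_mul_norm_le
  refine ⟨m⁻¹ * ‖v‖, ?_⟩
  rintro _ ⟨x, hx, rfl⟩
  rw [le_inv_mul_iff₀ hm]
  calc m * ⟪x, v⟫ ≤ m * ‖x‖ * ‖v‖ := by
        rw [mul_assoc]; exact mul_le_mul_of_nonneg_left (real_inner_le_norm x v) hm.le
    _ ≤ 1 * ‖v‖ := by gcongr; exact (hmN x).trans hx
    _ = ‖v‖ := one_mul _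

theorem inner_le_mul_dualNorm [FiniteDimensional ℝ X] {N : X → ℝ} (hN : IsNormOn N) (w v : X) :
    ⟪w, v⟫ ≤ N w * dualNorm N v := by
  rcases eq_or_ne w 0 with rfl | hw
  · simp [hN.map_zero]
  have hNw := hN.pos hw
  have hmem : (N w)⁻¹ * ⟪w, v⟫ ∈ {r : ℝ | ∃ x : X, N x ≤ 1 ∧ r = ⟪x, v⟫} :=
    ⟨(N w)⁻¹ • w, by rw [hN.map_smul_of_nonneg (inv_nonneg.2 hNw.le), inv_mul_cancel₀ hNw.ne'],
      by rw [real_inner_smul_left]⟩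
  have := le_csSup (hN.bddAbove_inner v) hmem
  rwa [inv_mul_le_iff₀ hNw] at this

end IsNormOn

def StrongConvexOnWrt {E : Type*} [AddCommGroup E] [Module ℝ E] (N : E → ℝ) (β : ℝ) (T : Set E)
    (F : E → ℝ) : Prop :=
  ∀ x ∈ T, ∀ w ∈ T, ∀ α : ℝ, 0 < α → α < 1 →
    F (α • x + (1 - α) • w) ≤ α * F x + (1 - α) * F w - β / 2 * α * (1 - α) * N (x - w) ^ 2

namespace StrongConvexOnWrt

variable {N : X → ℝ} {β : ℝ} {T : Set X} {F g : X → ℝ}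

theorem add_sq_le_of_almost_max (hF : StrongConvexOnWrt N β T F) (hT : Convex ℝ T) {y : X}
    (hgy : g y ∈ upperBounds ((fun p ↦ ⟪p, y⟫ - F p) '' T)) {w x : X} {ε α : ℝ} (hw : w ∈ T)
    (hwε : g y - ε ≤ ⟪w, y⟫ - F w) (hx : x ∈ T) (hα0 : 0 < α) (hα1 : α < 1) :
    ⟪x, y⟫ - F x + β / 2 * (1 - α) * N (x - w) ^ 2 ≤ g y + ε / α := by
  have hε : 0 ≤ ε := by linarith [hgy ⟨w, hw, rfl⟩]
  have hp : α • x + (1 - α) • w ∈ T := hT hx hw hα0.le (by linarith) (by ring)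
  have hmid := hgy ⟨_, hp, rfl⟩
  simp only [inner_add_left, real_inner_smul_left] at hmid
  have hsc := hF x hx w hw α hα0 hα1
  have hwε' := mul_le_mul_of_nonneg_left hwε (sub_nonneg.2 hα1.le)
  rw [← sub_le_iff_le_add', le_div_iff₀ hα0]
  nlinarith

theorem le_add_slope_add (hF : StrongConvexOnWrt N β T F) (hT : Convex ℝ T) (hβ : 0 < β)
    (hg : ∀ y, IsLUB ((fun p ↦ ⟪p, y⟫ - F p) '' T) (g y)) {v : X} {d : ℝ}
    (hd : ∀ z, ⟪z, v⟫ ≤ N z * d) (y : X) {s : ℝ} (hs0 : 0 < s) (hs1 : s < 1) :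
    g (y + v) ≤ g y + s⁻¹ * (g (y + s • v) - g y) + 2 * s + d ^ 2 / (2 * β * (1 - s)) := by
  -- an `s ^ 2`-maximiser, so that both error terms `s ^ 2 / s` below vanish as `s → 0`
  obtain ⟨_, ⟨w, hw, rfl⟩, hwlt, -⟩ := (hg y).exists_between (sub_lt_self (g y) (pow_pos hs0 2))
  have hslope : ⟪w, v⟫ ≤ s⁻¹ * (g (y + s • v) - g y) + s := by
    have hFY := (hg (y + s • v)).1 ⟨w, hw, rfl⟩
    simp only [inner_add_right, real_inner_smul_right] at hFY
    rw [← sub_le_iff_le_add, le_inv_mul_iff₀ hs0]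
    nlinarith
  refine (hg (y + v)).2 ?_
  rintro _ ⟨x, hx, rfl⟩
  have hgrowth := hF.add_sq_le_of_almost_max hT (hg y).1 hw hwlt.le hx hs0 hs1
  have hs2 : s ^ 2 / s = s := by field_simp
  have hβs : 0 < 2 * β * (1 - s) := by nlinarith
  have hamgm : ⟪x - w, v⟫ - β / 2 * (1 - s) * N (x - w) ^ 2 ≤ d ^ 2 / (2 * β * (1 - s)) := by
    rw [le_div_iff₀ hβs]
    nlinarith [sq_nonneg (β * (1 - s) * N (x - w) - d), hd (x - w)]
  simp only [inner_add_right, inner_sub_left] at hamgm ⊢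
  linarith

theorem le_add_inner_gradient_add [CompleteSpace X] (hF : StrongConvexOnWrt N β T F)
    (hT : Convex ℝ T) (hβ : 0 < β) (hg : ∀ y, IsLUB ((fun p ↦ ⟪p, y⟫ - F p) '' T) (g y)) {v : X} {d : ℝ}
    (hd : ∀ z, ⟪z, v⟫ ≤ N z * d) {y : X} (hgy : DifferentiableAt ℝ g y) :
    g (y + v) ≤ g y + ⟪gradient g y, v⟫ + 1 / (2 * β) * d ^ 2 := by
  have hslope : Tendsto (fun s ↦ s⁻¹ * (g (y + s • v) - g y)) (𝓝[>] 0)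
      (𝓝 ⟪gradient g y, v⟫) := by
    have := HasDerivAt.tendsto_slope_zero_right (hgy.hasFDerivAt.hasLineDerivAt v)
    rw [hgy.hasGradientAt.fderiv_apply] at this
    simpa using this
  have hrest : Tendsto (fun s : ℝ ↦ 2 * s + d ^ 2 / (2 * β * (1 - s))) (𝓝[>] 0)
      (𝓝 (1 / (2 * β) * d ^ 2)) := by
    have hcont : ContinuousAt (fun s : ℝ ↦ 2 * s + d ^ 2 / (2 * β * (1 - s))) 0 :=
      by fun_prop (disch := simp [hβ.ne'])
    convert hcont.tendsto.mono_left nhdsWithin_le_nhds using 2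
    simp only [mul_zero, sub_zero, mul_one, zero_add]
    ring
  refine ge_of_tendsto ((tendsto_const_nhds.add hslope).add hrest) ?_
  filter_upwards [Ioo_mem_nhdsGT zero_lt_one] with s ⟨hs0, hs1⟩
  linarith [hF.le_add_slope_add hT hβ hg hd y hs0 hs1]

end StrongConvexOnWrt

section ConjugateInterface

variable {f : X → EReal}

theorem EReal.ne_top_and_toReal_le_of_le_coe {e : EReal} {r : ℝ} (he : e ≠ ⊥) (h : e ≤ r) :
    e ≠ ⊤ ∧ e.toReal ≤ r :=
  ⟨(h.trans_lt (EReal.coe_lt_top r)).ne, by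
    simpa using EReal.toReal_le_toReal h he (EReal.coe_ne_top r)⟩

theorem ERealConvexOn.convexOn_toReal (hfbot : ∀ x, f x ≠ ⊥) (hconv : ERealConvexOn f) :
    ConvexOn ℝ {z | f z ≠ ⊤} (fun z ↦ (f z).toReal) := by
  have key : ∀ x ∈ {z | f z ≠ ⊤}, ∀ w ∈ {z | f z ≠ ⊤}, ∀ a : ℝ, 0 ≤ a → a ≤ 1 →
      f (a • x + (1 - a) • w) ≠ ⊤ ∧
        (f (a • x + (1 - a) • w)).toReal ≤ a * (f x).toReal + (1 - a) * (f w).toReal := by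
    intro x hx w hw a ha0 ha1
    have h := hconv x w a ha0 ha1
    rw [← EReal.coe_toReal hx (hfbot x), ← EReal.coe_toReal hw (hfbot w), ← EReal.coe_mul,
      ← EReal.coe_mul, ← EReal.coe_add] at h
    exact EReal.ne_top_and_toReal_le_of_le_coe (hfbot _) h
  refine ⟨fun x hx w hw a b ha hb hab ↦ ?_, fun x hx w hw a b ha hb hab ↦ ?_⟩
  · obtain rfl : b = 1 - a := eq_sub_of_add_eq' hab
    exact (key x hx w hw a ha (by linarith)).1
  · obtain rfl : b = 1 - a := eq_sub_of_add_eq' hab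
    exact (key x hx w hw a ha (by linarith)).2

theorem EStrongConvexOn.strongConvexOnWrt_toReal {N : X → ℝ} {β : ℝ} (hfbot : ∀ x, f x ≠ ⊥)
    (hsc : EStrongConvexOn N β f) :
    StrongConvexOnWrt N β (intrinsicInterior ℝ {z | f z ≠ ⊤}) (fun z ↦ (f z).toReal) := by
  intro x hx w hw α hα0 hα1
  have h := hsc x hx w hw α hα0 hα1
  rw [← EReal.coe_toReal (intrinsicInterior_subset hx) (hfbot x),
    ← EReal.coe_toReal (intrinsicInterior_subset hw) (hfbot w), ← EReal.coe_mul, ← EReal.coe_mul,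
    ← EReal.coe_add, ← EReal.coe_sub] at h
  exact (EReal.ne_top_and_toReal_le_of_le_coe (hfbot _) h).2

theorem isLUB_of_coe_eq_fenchelConj [FiniteDimensional ℝ X] (hfbot : ∀ x, f x ≠ ⊥)
    (hconv : ERealConvexOn f) {y : X} {r : ℝ} (hr : (r : EReal) = fenchelConj f y) :
    IsLUB ((fun x ↦ ⟪x, y⟫ - (f x).toReal) '' intrinsicInterior ℝ {z | f z ≠ ⊤}) r := by
  have hval : ∀ x, f x ≠ ⊤ → ((⟪x, y⟫ - (f x).toReal : ℝ) : EReal) = ⟪x, y⟫ - f x := fun x hx ↦ by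
    rw [EReal.coe_sub, EReal.coe_toReal hx (hfbot x)]
  refine ⟨?_, fun B hB ↦ ?_⟩
  · rintro _ ⟨x, hx, rfl⟩
    rw [← EReal.coe_le_coe_iff, hval x (intrinsicInterior_subset hx), hr]
    exact le_iSup (fun x ↦ ((⟪x, y⟫ : ℝ) : EReal) - f x) x
  · have hconc : ConcaveOn ℝ {z | f z ≠ ⊤} (fun x ↦ ⟪x, y⟫ - (f x).toReal) := by
      have hF := hconv.convexOn_toReal hfbot
      have hlin : (fun x ↦ ⟪x, y⟫ - (f x).toReal) = ⇑(innerₛₗ ℝ y) - fun x ↦ (f x).toReal := by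
        ext x
        simp [real_inner_comm]
      rw [hlin]
      exact ((innerₛₗ ℝ y).concaveOn hF.1).sub hF
    rw [← EReal.coe_le_coe_iff, hr]
    refine iSup_le fun x ↦ ?_
    by_cases hx : f x = ⊤
    · simp [hx]
    · rw [← hval x hx, EReal.coe_le_coe_iff]
      exact hconc.le_of_forall_intrinsicInterior_le (fun z hz ↦ hB ⟨z, hz, rfl⟩) hx

end ConjugateInterface

theorem stmt1_general [FiniteDimensional ℝ X]
    (N : X → ℝ) (hN : IsNormOn N) (β : ℝ) (hβ : 0 < β)
    (f : X → EReal) (hfbot : ∀ x, f x ≠ ⊥)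
    (hconv : ERealConvexOn f)
    (hsc : EStrongConvexOn N β f)
    (g : X → ℝ) (hg : ∀ y, (g y : EReal) = fenchelConj f y)
    (hgdiff : Differentiable ℝ g) (hstar0 : g 0 = 0)
    (n : ℕ) (v : ℕ → X) (u : X) :
    ((↑(∑ i ∈ Finset.range n, ⟪v i, u⟫) : EReal) - f u
        ≤ ((g (∑ i ∈ Finset.range n, v i) : ℝ) : EReal)) ∧
      g (∑ i ∈ Finset.range n, v i) ≤
        (∑ i ∈ Finset.range n, ⟪gradient g (∑ j ∈ Finset.range i, v j), v i⟫)
          + 1 / (2 * β) * ∑ i ∈ Finset.range n, dualNorm N (v i) ^ 2 := by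
  have hstep : ∀ y w, g (y + w) ≤ g y + ⟪gradient g y, w⟫ + 1 / (2 * β) * dualNorm N w ^ 2 :=
    fun y w ↦ (hsc.strongConvexOnWrt_toReal hfbot).le_add_inner_gradient_add
      (hconv.convexOn_toReal hfbot).1.intrinsicInterior hβ
      (fun y ↦ isLUB_of_coe_eq_fenchelConj hfbot hconv (hg y))
      (hN.inner_le_mul_dualNorm · w) (hgdiff y)
  refine ⟨?_, ?_⟩
  · rw [hg, ← sum_inner, real_inner_comm]
    exact le_iSup (fun x ↦ ((⟪x, ∑ i ∈ Finset.range n, v i⟫ : ℝ) : EReal) - f x) u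
  · induction n with
    | zero => simp [hstar0]
    | succ n ih =>
      simp only [Finset.sum_range_succ]
      linarith [hstep (∑ i ∈ Finset.range n, v i) (v n)]

/-- The key inequality (Corollary 2.4): if `f` is `β`-strongly convex w.r.t. `N`, closed and
convex, with `f⋆(0) = 0`, and `g` is the (everywhere-finite, differentiable) function
representing the conjugate `f⋆`, then for any sequence `v_1, …, v_n` and any `u`,
`∑ ⟪v_i, u⟫ - f(u) ≤ f⋆(v_{1:n}) ≤ ∑ ⟪∇f⋆(v_{1:i-1}), v_i⟫ + (1/(2β)) ∑ (dualNorm N (v_i))²`. -/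
theorem stmt1 [FiniteDimensional ℝ X]
    (N : X → ℝ) (hN : IsNormOn N) (β : ℝ) (hβ : 0 < β)
    (f : X → EReal) (hfbot : ∀ x, f x ≠ ⊥) (hproper : ∃ x, f x ≠ ⊤)
    (hclosed : LowerSemicontinuous f) (hconv : ERealConvexOn f)
    (hsc : EStrongConvexOn N β f)
    (g : X → ℝ) (hg : ∀ y, (g y : EReal) = fenchelConj f y)
    (hgdiff : Differentiable ℝ g) (hstar0 : g 0 = 0)
    (n : ℕ) (v : ℕ → X) (u : X) :
    ((↑(∑ i ∈ Finset.range n, ⟪v i, u⟫) : EReal) - f u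
        ≤ ((g (∑ i ∈ Finset.range n, v i) : ℝ) : EReal)) ∧
      g (∑ i ∈ Finset.range n, v i) ≤
        (∑ i ∈ Finset.range n, ⟪gradient g (∑ j ∈ Finset.range i, v j), v i⟫)
          + 1 / (2 * β) * ∑ i ∈ Finset.range n, dualNorm N (v i) ^ 2 :=
  stmt1_general N hN β hβ f hfbot hconv hsc g hg hgdiff hstar0 n v u
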